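/- arXiv:2208.00029 — 8 statements merged into one kernel-verified Lean document; each statement's English description precedes it below -/
import Mathlib

section
/- Let Ver : ZMod 4 → ZMod 4 → Bool be defined by Ver x y = true if and only if x + y ∈ {2, 3} (arithmetic in ZMod 4). Let σ₁ be the pair of permutations (x ↦ x + 1, y ↦ y - 1) of ZMod 4 and σ₂ the pair (x ↦ 1 - x, y ↦ -y), and let S be the subgroup of Equiv.Perm (ZMod 4) × Equiv.Perm (ZMod 4) generated by σ₁ and σ₂. Then Ver is regular with respect to S: (a) for every s ∈ S and every (x, y), Ver (s.1 x) (s.2 y) = Ver x y; and (b) for every (x₁, y₁) and (x₂, y₂) with Ver x₁ y₁ = Ver x₂ y₂, there exists exactly one s ∈ S with (s.1 x₁, s.2 y₁) = (x₂, y₂). -/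
/-- The versatile gadget: `Ver x y = true` iff `x + y ∈ {2, 3}` in `ZMod 4`. -/
def Ver (x y : ZMod 4) : Bool := decide (x + y = 2 ∨ x + y = 3)

/-- The first generator: `(x ↦ x + 1, y ↦ y - 1)`. -/
def sigma1 : Equiv.Perm (ZMod 4) × Equiv.Perm (ZMod 4) :=
  (Equiv.addRight 1, Equiv.subRight 1)

/-- The second generator: `(x ↦ 1 - x, y ↦ -y)`. -/
def sigma2 : Equiv.Perm (ZMod 4) × Equiv.Perm (ZMod 4) :=
  (Equiv.subLeft 1, Equiv.neg (ZMod 4))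

/-!
The closure of `{sigma1, sigma2}` is the group of the eight pairs `sigma2 ^ i * sigma1 ^ j`,
`i < 2`, `j < 4`; they are the maps `(x, y) ↦ (ε x + a, ε y + b)` with `ε = ±1` and
`a + b = 0` if `ε = 1`, `a + b = 1` if `ε = -1`. So each of them sends `x + y` to `x + y` or to
`1 - (x + y)`, and both maps preserve `{2, 3}`. The action is free: for `ε = -1` a fixed point
would need `2 y = b` with `b` odd. Eight elements acting freely on a fiber of eight points act
transitively on it.
-/

set_option maxRecDepth 4000

open Equiv Subgroup

theorem existsUnique_apply_eq_of_free {α β : Type*} (H : Subgroup (Perm α × Perm β))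
    (hfree : ∀ s ∈ H, ∀ x y, s.1 x = x → s.2 y = y → s = 1) {x₁ x₂ : α} {y₁ y₂ : β}
    (hex : ∃ s ∈ H, s.1 x₁ = x₂ ∧ s.2 y₁ = y₂) :
    ∃! s : H, ((s : Perm α × Perm β).1 x₁, (s : Perm α × Perm β).2 y₁) = (x₂, y₂) := by
  obtain ⟨s, hs, hx, hy⟩ := hex
  refine ⟨⟨s, hs⟩, by simp [hx, hy], ?_⟩
  rintro ⟨t, ht⟩ hts
  simp only [Prod.mk.injEq] at hts
  have hst : s⁻¹ * t = 1 :=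
    hfree _ (mul_mem (inv_mem hs) ht) x₁ y₁ (by simp [hts.1, ← hx]) (by simp [hts.2, ← hy])
  exact Subtype.ext (inv_mul_eq_one.mp hst).symm

def verGroupElems : Finset (Perm (ZMod 4) × Perm (ZMod 4)) :=
  (Finset.univ : Finset (Fin 2 × Fin 4)).image fun ij => sigma2 ^ (ij.1 : ℕ) * sigma1 ^ (ij.2 : ℕ)

def verGroup : Subgroup (Perm (ZMod 4) × Perm (ZMod 4)) where
  carrier := verGroupElems
  one_mem' := by decide
  mul_mem' {a b} ha hb := by
    have hmul : ∀ a ∈ verGroupElems, ∀ b ∈ verGroupElems, a * b ∈ verGroupElems := by decide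
    exact hmul a ha b hb
  inv_mem' {a} ha := by
    have hinv : ∀ a ∈ verGroupElems, a⁻¹ ∈ verGroupElems := by decide
    exact hinv a ha

theorem mem_verGroup {s : Perm (ZMod 4) × Perm (ZMod 4)} : s ∈ verGroup ↔ s ∈ verGroupElems :=
  Iff.rfl

theorem closure_sigma_eq_verGroup :
    closure ({sigma1, sigma2} : Set (Perm (ZMod 4) × Perm (ZMod 4))) = verGroup := by
  refine le_antisymm (closure_le _ |>.mpr ?_) fun s hs => ?_
  · rintro s (rfl | rfl) <;> exact mem_verGroup.mpr (by decide)
  · obtain ⟨⟨i, j⟩, -, rfl⟩ := Finset.mem_image.mp (mem_verGroup.mp hs)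
    exact mul_mem (pow_mem (subset_closure (by simp)) _) (pow_mem (subset_closure (by simp)) _)

theorem ver_apply_of_mem_verGroup :
    ∀ s ∈ verGroup, ∀ x y, Ver (s.1 x) (s.2 y) = Ver x y := by
  simp only [mem_verGroup]
  decide

theorem eq_one_of_mem_verGroup_of_fixed :
    ∀ s ∈ verGroup, ∀ x y, s.1 x = x → s.2 y = y → s = 1 := by
  simp only [mem_verGroup]
  decide

theorem exists_mem_verGroup_apply_eq :
    ∀ x₁ y₁ x₂ y₂, Ver x₁ y₁ = Ver x₂ y₂ → ∃ s ∈ verGroup, s.1 x₁ = x₂ ∧ s.2 y₁ = y₂ := by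
  simp only [mem_verGroup]
  decide

/-- `Ver` is regular with respect to the subgroup generated by `sigma1` and `sigma2`. -/
theorem ver_regular :
    (∀ s ∈ Subgroup.closure ({sigma1, sigma2} :
        Set (Equiv.Perm (ZMod 4) × Equiv.Perm (ZMod 4))),
      ∀ x y : ZMod 4, Ver (s.1 x) (s.2 y) = Ver x y) ∧
    (∀ x₁ y₁ x₂ y₂ : ZMod 4, Ver x₁ y₁ = Ver x₂ y₂ →
      ∃! s : Subgroup.closure ({sigma1, sigma2} :
          Set (Equiv.Perm (ZMod 4) × Equiv.Perm (ZMod 4))),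
        ((s : Equiv.Perm (ZMod 4) × Equiv.Perm (ZMod 4)).1 x₁,
         (s : Equiv.Perm (ZMod 4) × Equiv.Perm (ZMod 4)).2 y₁) = (x₂, y₂)) := by
  rw [closure_sigma_eq_verGroup]
  exact ⟨ver_apply_of_mem_verGroup, fun x₁ y₁ x₂ y₂ hV =>
    existsUnique_apply_eq_of_free _ eq_one_of_mem_verGroup_of_fixed
      (exists_mem_verGroup_apply_eq x₁ y₁ x₂ y₂ hV)⟩
end

section
/- Let α be a finite type and let g : α → α → Bool be regular with respect to a subgroup S of Equiv.Perm α × Equiv.Perm α. If both fibers g⁻¹(true) = {(x,y) : g x y = true} and g⁻¹(false) are nonempty, then the cardinality of S equals the cardinality of g⁻¹(true), which equals the cardinality of g⁻¹(false); consequently each fiber has cardinality (Fintype.card α)² / 2. -/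
/-- A bipartite Boolean function `g` is regular with respect to a subgroup `S` of
`Equiv.Perm α × Equiv.Perm α` if the coordinatewise action of `S` preserves `g` and `S`
acts simply transitively on each fiber of `g`. -/
def IsRegularGadget {α : Type*} (g : α → α → Bool)
    (S : Subgroup (Equiv.Perm α × Equiv.Perm α)) : Prop :=
  (∀ s ∈ S, ∀ x y : α, g (s.1 x) (s.2 y) = g x y) ∧
  (∀ x₁ y₁ x₂ y₂ : α, g x₁ y₁ = g x₂ y₂ →
    ∃! s : S, ((s : Equiv.Perm α × Equiv.Perm α).1 x₁,
               (s : Equiv.Perm α × Equiv.Perm α).2 y₁) = (x₂, y₂))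

/-! Each fiber of a regular gadget is an `S`-torsor, so it has `|S|` elements; the two fibers
partition `α × α`, hence each has `|α|² / 2` elements. -/

theorem Nat.card_setOf_eq_true_add_card_setOf_eq_false {β : Type*} [Finite β] (f : β → Bool) :
    Nat.card {x | f x = true} + Nat.card {x | f x = false} = Nat.card β := by
  have hcompl : {x | f x = false} = {x | f x = true}ᶜ := by
    ext x
    simp
  rw [hcompl, Nat.card_coe_set_eq, Nat.card_coe_set_eq, Set.ncard_add_ncard_compl]

namespace IsRegularGadget

variable {α : Type*} {g : α → α → Bool} {S : Subgroup (Equiv.Perm α × Equiv.Perm α)}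

theorem card_eq_card_fiber (hreg : IsRegularGadget g S) {b : Bool} {p₀ : α × α}
    (hp₀ : g p₀.1 p₀.2 = b) : Nat.card S = Nat.card {p : α × α | g p.1 p.2 = b} := by
  let orbitMap : S → {p : α × α | g p.1 p.2 = b} := fun s =>
    ⟨((s : Equiv.Perm α × Equiv.Perm α).1 p₀.1, (s : Equiv.Perm α × Equiv.Perm α).2 p₀.2),
      (hreg.1 s s.2 p₀.1 p₀.2).trans hp₀⟩
  refine Nat.card_eq_of_bijective orbitMap ⟨fun s t hst => ?_, fun ⟨p, hp⟩ => ?_⟩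
  · obtain ⟨u, -, hu⟩ := hreg.2 p₀.1 p₀.2 _ _ (hp₀.trans (orbitMap t).2.symm)
    exact (hu s (congrArg Subtype.val hst)).trans (hu t rfl).symm
  · obtain ⟨s, hs, -⟩ := hreg.2 p₀.1 p₀.2 p.1 p.2 (hp₀.trans hp.symm)
    exact ⟨s, Subtype.ext hs⟩

end IsRegularGadget

/-- If `g` is regular w.r.t. `S` and both fibers are nonempty, then `|S|` equals the size
of each fiber, the two fibers have equal size, and each fiber has size `|α|² / 2`. -/
theorem card_fibers_of_regular {α : Type*} [Fintype α]
    (g : α → α → Bool) (S : Subgroup (Equiv.Perm α × Equiv.Perm α))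
    (hreg : IsRegularGadget g S)
    (h1 : {p : α × α | g p.1 p.2 = true}.Nonempty)
    (h0 : {p : α × α | g p.1 p.2 = false}.Nonempty) :
    Nat.card S = Nat.card {p : α × α | g p.1 p.2 = true} ∧
    Nat.card {p : α × α | g p.1 p.2 = true} = Nat.card {p : α × α | g p.1 p.2 = false} ∧
    Nat.card {p : α × α | g p.1 p.2 = true} = (Fintype.card α) ^ 2 / 2 := by
  obtain ⟨p₁, hp₁⟩ := h1
  obtain ⟨p₀, hp₀⟩ := h0
  have hcard_true := hreg.card_eq_card_fiber hp₁
  have hcard_false := hreg.card_eq_card_fiber hp₀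
  have hsum := Nat.card_setOf_eq_true_add_card_setOf_eq_false fun p : α × α => g p.1 p.2
  rw [Nat.card_prod, Nat.card_eq_fintype_card (α := α), ← sq] at hsum
  refine ⟨hcard_true, hcard_true.symm.trans hcard_false, ?_⟩
  omega
end

section
/- Let α be a finite type, let g : α → α → Bool be regular with respect to a subgroup S of Equiv.Perm α × Equiv.Perm α, let m be the cardinality of S and fix an enumeration e : Fin m ≃ S. Fix n and a, b : Fin n → α. Then the set of values of the Unfold map, namely { Unfold(a,b)(I) : I ∈ (Fin n → Fin m) }, equals the product of fibers { (a', b') : (Fin n → α) × (Fin n → α) | ∀ i, g (a' i) (b' i) = g (a i) (b i) }. -/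
/-- The `Unfold` map: given an enumeration `e : Fin m ≃ S` of the symmetry group and an
input `(a, b)` to `g^n`, it sends an index tuple `I : Fin n → Fin m` to the input to `g^n`
obtained by applying the `I i`-th symmetry in the `i`-th coordinate. -/
def Unfold {α : Type*} {S : Subgroup (Equiv.Perm α × Equiv.Perm α)} {m n : ℕ}
    (e : Fin m ≃ S) (a b : Fin n → α) (I : Fin n → Fin m) :
    (Fin n → α) × (Fin n → α) :=
  (fun i => (e (I i) : Equiv.Perm α × Equiv.Perm α).1 (a i),
   fun i => (e (I i) : Equiv.Perm α × Equiv.Perm α).2 (b i))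

/-!
Since `e` enumerates all of `S`, the values of `Unfold` are exactly the pairs lying
coordinatewise in the `S`-orbits of the `(aᵢ, bᵢ)`. Regularity says that these orbits are the
fibers of `g`: invariance puts the orbit inside the fiber, transitivity gives the converse.
-/

theorem IsRegularGadget.exists_map_eq_iff {α : Type*} {g : α → α → Bool}
    {S : Subgroup (Equiv.Perm α × Equiv.Perm α)} (hreg : IsRegularGadget g S)
    (x y x' y' : α) :
    (∃ s : S, (s : Equiv.Perm α × Equiv.Perm α).1 x = x' ∧
      (s : Equiv.Perm α × Equiv.Perm α).2 y = y') ↔ g x' y' = g x y := by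
  constructor
  · rintro ⟨s, rfl, rfl⟩
    exact hreg.1 s s.2 x y
  · intro h
    obtain ⟨s, hs, -⟩ := hreg.2 x y x' y' h.symm
    exact ⟨s, Prod.ext_iff.mp hs⟩

theorem range_unfold_eq_setOf_forall_exists {α : Type*}
    {S : Subgroup (Equiv.Perm α × Equiv.Perm α)} {m n : ℕ} (e : Fin m ≃ S)
    (a b : Fin n → α) :
    Set.range (Unfold e a b) =
      {p : (Fin n → α) × (Fin n → α) | ∀ i, ∃ s : S,
        (s : Equiv.Perm α × Equiv.Perm α).1 (a i) = p.1 i ∧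
          (s : Equiv.Perm α × Equiv.Perm α).2 (b i) = p.2 i} := by
  ext p
  constructor
  · rintro ⟨I, rfl⟩ i
    exact ⟨e (I i), rfl, rfl⟩
  · intro hp
    choose s hs₁ hs₂ using hp
    refine ⟨fun i => e.symm (s i), Prod.ext ?_ ?_⟩ <;> funext i <;>
      simp only [Unfold, Equiv.apply_symm_apply, hs₁, hs₂]

theorem range_unfold_general {α : Type*}
    (g : α → α → Bool) (S : Subgroup (Equiv.Perm α × Equiv.Perm α))
    (hreg : IsRegularGadget g S) {m n : ℕ} (e : Fin m ≃ S) (a b : Fin n → α) :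
    Set.range (Unfold e a b) =
      {p : (Fin n → α) × (Fin n → α) | ∀ i, g (p.1 i) (p.2 i) = g (a i) (b i)} := by
  simp only [range_unfold_eq_setOf_forall_exists, hreg.exists_map_eq_iff]

/-- Claim (i): the set of values of `Unfold (a, b)` is exactly the product of the fibers
`g⁻¹(g (aᵢ) (bᵢ))`, i.e. the set of all `(a', b')` encoding the same string as `(a, b)`. -/
theorem range_unfold {α : Type*} [Fintype α]
    (g : α → α → Bool) (S : Subgroup (Equiv.Perm α × Equiv.Perm α))
    (hreg : IsRegularGadget g S) {m n : ℕ} (e : Fin m ≃ S) (a b : Fin n → α) :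
    Set.range (Unfold e a b) =
      {p : (Fin n → α) × (Fin n → α) | ∀ i, g (p.1 i) (p.2 i) = g (a i) (b i)} :=
  range_unfold_general g S hreg e a b
end

section
/- Let α be a finite type, let g : α → α → Bool be regular with respect to a subgroup S of Equiv.Perm α × Equiv.Perm α, let m be the cardinality of S and fix an enumeration e : Fin m ≃ S. Fix n and a, b, a', b' : Fin n → α. If there exists an index i with g (a i) (b i) ≠ g (a' i) (b' i), then the sets { Unfold(a,b)(I) : I ∈ (Fin n → Fin m) } and { Unfold(a',b')(I) : I ∈ (Fin n → Fin m) } are disjoint. -/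
theorem apply_unfold_of_invariant {α : Type*} {g : α → α → Bool}
    {S : Subgroup (Equiv.Perm α × Equiv.Perm α)}
    (hg : ∀ s ∈ S, ∀ x y : α, g (s.1 x) (s.2 y) = g x y) {m n : ℕ} (e : Fin m ≃ S)
    (a b : Fin n → α) (I : Fin n → Fin m) (i : Fin n) :
    g ((Unfold e a b I).1 i) ((Unfold e a b I).2 i) = g (a i) (b i) :=
  hg _ (e (I i)).2 _ _

theorem unfold_disjoint_general {α : Type*}
    (g : α → α → Bool) (S : Subgroup (Equiv.Perm α × Equiv.Perm α))
    (hreg : IsRegularGadget g S) {m n : ℕ} (e : Fin m ≃ S) (a b a' b' : Fin n → α)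
    (h : ∃ i, g (a i) (b i) ≠ g (a' i) (b' i)) :
    Disjoint (Set.range (Unfold e a b)) (Set.range (Unfold e a' b')) := by
  obtain ⟨i, hi⟩ := h
  refine Set.disjoint_left.2 ?_
  rintro _ ⟨I, rfl⟩ ⟨J, hJ⟩
  apply hi
  rw [← apply_unfold_of_invariant hreg.1 e a b I i, ← hJ,
    apply_unfold_of_invariant hreg.1 e a' b' J i]

/-- Claim (iii): if `(a, b)` and `(a', b')` encode different strings, then the sets of
values of `Unfold (a, b)` and `Unfold (a', b')` are disjoint. -/
theorem unfold_disjoint {α : Type*} [Fintype α]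
    (g : α → α → Bool) (S : Subgroup (Equiv.Perm α × Equiv.Perm α))
    (hreg : IsRegularGadget g S) {m n : ℕ} (e : Fin m ≃ S) (a b a' b' : Fin n → α)
    (h : ∃ i, g (a i) (b i) ≠ g (a' i) (b' i)) :
    Disjoint (Set.range (Unfold e a b)) (Set.range (Unfold e a' b')) :=
  unfold_disjoint_general g S hreg e a b a' b' h
end

section
/- Let α be a finite type, let g : α → α → Bool be regular with respect to a subgroup S of Equiv.Perm α × Equiv.Perm α, let m be the cardinality of S and fix an enumeration e : Fin m ≃ S. Fix n and a, b, a', b' : Fin n → α. If g (a i) (b i) = g (a' i) (b' i) for every index i, then the sets { Unfold(a,b)(I) : I ∈ (Fin n → Fin m) } and { Unfold(a',b')(I) : I ∈ (Fin n → Fin m) } are equal. -/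
/-! Regularity puts each coordinate `(a i, b i)` in the `S`-orbit of `(a' i, b' i)`, say
`(a i, b i) = tᵢ • (a' i, b' i)`. Right multiplication by `tᵢ` permutes `S`, so it reindexes the
tuples of `Unfold e a b` as tuples of `Unfold e a' b'`. -/

section

variable {α : Type*} {S : Subgroup (Equiv.Perm α × Equiv.Perm α)} {m n : ℕ}

theorem IsRegularGadget.exists_apply_eq {g : α → α → Bool} (hreg : IsRegularGadget g S)
    {x₁ y₁ x₂ y₂ : α} (h : g x₁ y₁ = g x₂ y₂) :
    ∃ s : S, (s : Equiv.Perm α × Equiv.Perm α).1 x₁ = x₂ ∧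
      (s : Equiv.Perm α × Equiv.Perm α).2 y₁ = y₂ := by
  obtain ⟨s, hs, -⟩ := hreg.2 x₁ y₁ x₂ y₂ h
  exact ⟨s, Prod.ext_iff.mp hs⟩

theorem unfold_mul (e : Fin m ≃ S) (a b : Fin n → α) (I : Fin n → Fin m) (t : Fin n → S) :
    Unfold e a b (fun i => e.symm (e (I i) * t i)) =
      Unfold e (fun i => (t i : Equiv.Perm α × Equiv.Perm α).1 (a i))
        (fun i => (t i : Equiv.Perm α × Equiv.Perm α).2 (b i)) I := by
  simp [Unfold, Equiv.Perm.mul_apply]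

theorem range_unfold_translate_subset (e : Fin m ≃ S) (a b : Fin n → α) (t : Fin n → S) :
    Set.range (Unfold e (fun i => (t i : Equiv.Perm α × Equiv.Perm α).1 (a i))
        (fun i => (t i : Equiv.Perm α × Equiv.Perm α).2 (b i))) ⊆
      Set.range (Unfold e a b) := by
  rintro _ ⟨I, rfl⟩
  exact ⟨_, unfold_mul e a b I t⟩

theorem range_unfold_subset {g : α → α → Bool} (hreg : IsRegularGadget g S) (e : Fin m ≃ S)
    {a b a' b' : Fin n → α} (h : ∀ i, g (a i) (b i) = g (a' i) (b' i)) :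
    Set.range (Unfold e a b) ⊆ Set.range (Unfold e a' b') := by
  choose t hta htb using fun i => hreg.exists_apply_eq (h i).symm
  obtain rfl : (fun i => (t i : Equiv.Perm α × Equiv.Perm α).1 (a' i)) = a := funext hta
  obtain rfl : (fun i => (t i : Equiv.Perm α × Equiv.Perm α).2 (b' i)) = b := funext htb
  exact range_unfold_translate_subset e a' b' t

end

theorem unfold_eq_general {α : Type*}
    (g : α → α → Bool) (S : Subgroup (Equiv.Perm α × Equiv.Perm α))
    (hreg : IsRegularGadget g S) {m n : ℕ} (e : Fin m ≃ S) (a b a' b' : Fin n → α)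
    (h : ∀ i, g (a i) (b i) = g (a' i) (b' i)) :
    Set.range (Unfold e a b) = Set.range (Unfold e a' b') :=
  (range_unfold_subset hreg e h).antisymm (range_unfold_subset hreg e fun i => (h i).symm)

/-- Claim (iv): if `(a, b)` and `(a', b')` encode the same string, then the sets of
values of `Unfold (a, b)` and `Unfold (a', b')` coincide. -/
theorem unfold_eq {α : Type*} [Fintype α]
    (g : α → α → Bool) (S : Subgroup (Equiv.Perm α × Equiv.Perm α))
    (hreg : IsRegularGadget g S) {m n : ℕ} (e : Fin m ≃ S) (a b a' b' : Fin n → α)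
    (h : ∀ i, g (a i) (b i) = g (a' i) (b' i)) :
    Set.range (Unfold e a b) = Set.range (Unfold e a' b') :=
  unfold_eq_general g S hreg e a b a' b' h
end

section
/- Let α be a finite type, let g : α → α → Bool be regular with respect to a subgroup S of Equiv.Perm α × Equiv.Perm α, let m be the cardinality of S and fix an enumeration e : Fin m ≃ S. Let N = 2^n and let a, b : Fin N → (Fin n → α). If the map j ↦ (fun i => g (a j i) (b j i)) from Fin N to (Fin n → Bool) is injective (i.e. the encoded input to the Collision problem is 1-to-1), then the map (j, I) ↦ Unfold(a j, b j)(I), from Fin N × (Fin n → Fin m) to (Fin n → α) × (Fin n → α), is injective. -/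
/-!
Symmetries in `S` preserve `g`, so every point of `Unfold e a b` has the same image under `g^n`
as `(a, b)`; hence two equal unfolded points come from the same `j`, by injectivity of
`j ↦ g^n (a j, b j)`. For a fixed `j`, the action of `S` on each coordinate is free, so the
symmetries and therefore the indices `I i` are recovered coordinatewise.
-/

namespace IsRegularGadget

variable {α : Type*} {g : α → α → Bool} {S : Subgroup (Equiv.Perm α × Equiv.Perm α)}

theorem apply_smul_eq (hreg : IsRegularGadget g S) (s : S) (x y : α) :
    g ((s : Equiv.Perm α × Equiv.Perm α).1 x) ((s : Equiv.Perm α × Equiv.Perm α).2 y) = g x y :=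
  hreg.1 s s.2 x y

theorem eq_of_smul_eq (hreg : IsRegularGadget g S) {s t : S} {x y : α}
    (h : ((s : Equiv.Perm α × Equiv.Perm α).1 x, (s : Equiv.Perm α × Equiv.Perm α).2 y) =
      ((t : Equiv.Perm α × Equiv.Perm α).1 x, (t : Equiv.Perm α × Equiv.Perm α).2 y)) :
    s = t :=
  (hreg.2 x y _ _ (hreg.apply_smul_eq s x y).symm).unique rfl h.symm

variable {m n : ℕ} (e : Fin m ≃ S)

theorem apply_unfold (hreg : IsRegularGadget g S) (a b : Fin n → α) (I : Fin n → Fin m)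
    (i : Fin n) : g ((Unfold e a b I).1 i) ((Unfold e a b I).2 i) = g (a i) (b i) :=
  hreg.apply_smul_eq (e (I i)) (a i) (b i)

theorem unfold_injective (hreg : IsRegularGadget g S) (a b : Fin n → α) :
    Function.Injective (Unfold e a b) := by
  intro I J h
  funext i
  apply e.injective
  apply hreg.eq_of_smul_eq (x := a i) (y := b i)
  simp only [Unfold, Prod.mk.injEq, funext_iff] at h
  exact Prod.ext (h.1 i) (h.2 i)

end IsRegularGadget

theorem unfold_one_to_one_general {α : Type*}
    (g : α → α → Bool) (S : Subgroup (Equiv.Perm α × Equiv.Perm α))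
    (hreg : IsRegularGadget g S) {m n N : ℕ} (e : Fin m ≃ S)
    (a b : Fin N → (Fin n → α))
    (hinj : Function.Injective (fun j : Fin N => fun i => g (a j i) (b j i))) :
    Function.Injective
      (fun jI : Fin N × (Fin n → Fin m) => Unfold e (a jI.1) (b jI.1) jI.2) := by
  rintro ⟨j₁, I₁⟩ ⟨j₂, I₂⟩ (h : Unfold e (a j₁) (b j₁) I₁ = Unfold e (a j₂) (b j₂) I₂)
  have hj : j₁ = j₂ := hinj <| funext fun i => by
    show g (a j₁ i) (b j₁ i) = g (a j₂ i) (b j₂ i)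
    rw [← hreg.apply_unfold e _ _ I₁ i, h, hreg.apply_unfold e]
  subst hj
  rw [hreg.unfold_injective e (a j₁) (b j₁) h]

/-- If the encoded input `j ↦ g^n(a j, b j)` to the Collision problem is 1-to-1, then the
combined map `(j, I) ↦ Unfold (a j, b j) I` produces a 1-to-1 list. -/
theorem unfold_one_to_one {α : Type*} [Fintype α]
    (g : α → α → Bool) (S : Subgroup (Equiv.Perm α × Equiv.Perm α))
    (hreg : IsRegularGadget g S) {m n N : ℕ} (hN : N = 2 ^ n) (e : Fin m ≃ S)
    (a b : Fin N → (Fin n → α))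
    (hinj : Function.Injective (fun j : Fin N => fun i => g (a j i) (b j i))) :
    Function.Injective
      (fun jI : Fin N × (Fin n → Fin m) => Unfold e (a jI.1) (b jI.1) jI.2) :=
  unfold_one_to_one_general g S hreg e a b hinj
end

section
/- (Rectangular reduction from Col_N ∘ g to BiCol.) Let α be a finite type, let g : α → α → Bool be regular with respect to a subgroup S of Equiv.Perm α × Equiv.Perm α, let m be the cardinality of S, let N = 2^n, and let M = N * m^n. Then there exist maps A : (Fin N → (Fin n → α)) → (Fin M → (Fin n → α)) and B : (Fin N → (Fin n → α)) → (Fin M → (Fin n → α)) (A depending only on Alice's input, B only on Bob's) such that for all a, b : Fin N → (Fin n → α), writing C(a,b) : Fin M → (Fin n → α) × (Fin n → α) for the list p ↦ (A a p, B b p): (1) if the map j ↦ (fun i => g (a j i) (b j i)) from Fin N to (Fin n → Bool) is injective, then C(a,b) is injective; and (2) if that map is 2-to-1 (every value in its range has exactly two preimages), then C(a,b) is 2-to-1. -/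
open Function

section FibredFamily

variable {ι κ β W : Type*} {G : β → W} {w : ι → W} {u : ι → κ → β}

noncomputable def uncurryFiberEquiv (hGu : ∀ j k, G (u j k) = w j)
    (hu : ∀ j v, G v = w j → ∃! k, u j k = v) (v : β) :
    {q : ι × κ // uncurry u q = v} ≃ {j // w j = G v} where
  toFun q := ⟨q.1.1, by obtain ⟨⟨j, k⟩, rfl⟩ := q; exact (hGu j k).symm⟩
  invFun j := ⟨(j, (hu j v j.2.symm).exists.choose), (hu j v j.2.symm).exists.choose_spec⟩
  left_inv := by
    rintro ⟨⟨j, k⟩, hk⟩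
    have hv : G v = w j := hk ▸ hGu j k
    ext
    · rfl
    · exact (hu j v hv).unique (hu j v hv).exists.choose_spec hk
  right_inv _ := rfl

theorem injective_uncurry (hGu : ∀ j k, G (u j k) = w j)
    (hu : ∀ j v, G v = w j → ∃! k, u j k = v) (hw : Injective w) : Injective (uncurry u) := by
  rintro ⟨j, k⟩ ⟨j', k'⟩ h
  obtain rfl : j = j' := hw ((hGu j k).symm.trans (congrArg G h ▸ hGu j' k'))
  rw [(hu j _ (hGu j k)).unique rfl h.symm]

end FibredFamily

section Gadget

variable {α : Type*} {g : α → α → Bool} {S : Subgroup (Equiv.Perm α × Equiv.Perm α)} {m n : ℕ}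

/-- The paper's `gⁿ`. -/
def gadgetPow (g : α → α → Bool) (v : (Fin n → α) × (Fin n → α)) : Fin n → Bool :=
  fun i => g (v.1 i) (v.2 i)

theorem gadgetPow_unfold (hreg : IsRegularGadget g S) (e : Fin m ≃ S) (x y : Fin n → α)
    (I : Fin n → Fin m) : gadgetPow g (Unfold e x y I) = gadgetPow g (x, y) :=
  funext fun i => hreg.1 _ (e (I i)).2 _ _

theorem existsUnique_unfold_eq (hreg : IsRegularGadget g S) (e : Fin m ≃ S)
    (x y : Fin n → α) (v : (Fin n → α) × (Fin n → α))
    (hv : gadgetPow g v = gadgetPow g (x, y)) : ∃! I, Unfold e x y I = v := by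
  choose s hs huniq using fun i => hreg.2 (x i) (y i) (v.1 i) (v.2 i) (congrFun hv i).symm
  simp only [Prod.mk.injEq] at hs huniq
  refine ⟨fun i => e.symm (s i), ?_, fun I hI => funext fun i => ?_⟩
  · ext i <;> simp [Unfold, hs]
  · rw [← huniq i (e (I i))
      ⟨congrFun (congrArg Prod.fst hI) i, congrFun (congrArg Prod.snd hI) i⟩,
      Equiv.symm_apply_apply]

end Gadget

theorem rectangular_reduction_general {α : Type*} [Fintype α]
    (g : α → α → Bool) (S : Subgroup (Equiv.Perm α × Equiv.Perm α))
    (hreg : IsRegularGadget g S) {m n N M : ℕ}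
    (hm : m = Nat.card S) (hM : M = N * m ^ n) :
    ∃ (A B : (Fin N → (Fin n → α)) → (Fin M → (Fin n → α))),
      ∀ a b : Fin N → (Fin n → α),
        (Function.Injective (fun j : Fin N => fun i => g (a j i) (b j i)) →
          Function.Injective (fun p : Fin M => (A a p, B b p))) ∧
        ((∀ w : Fin n → Bool, (∃ j, (fun i => g (a j i) (b j i)) = w) →
            Nat.card {j : Fin N // (fun i => g (a j i) (b j i)) = w} = 2) →
          ∀ w : (Fin n → α) × (Fin n → α), (∃ p, (A a p, B b p) = w) →
            Nat.card {p : Fin M // (A a p, B b p) = w} = 2) := by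
  obtain ⟨e⟩ : Nonempty (Fin m ≃ S) := ⟨(Finite.equivFinOfCardEq hm.symm).symm⟩
  obtain ⟨d⟩ : Nonempty (Fin M ≃ Fin N × (Fin n → Fin m)) :=
    ⟨Fintype.equivOfCardEq (by simp [hM])⟩
  let Φ (a b : Fin N → Fin n → α) := uncurry fun j => Unfold e (a j) (b j)
  -- `(A a p, B b p)` is then `Φ a b (d p)` by definition, so all goals are about `Φ a b`.
  refine ⟨fun a p => (Φ a a (d p)).1, fun b p => (Φ b b (d p)).2, fun a b => ?_⟩
  have hGu (j) := gadgetPow_unfold hreg e (a j) (b j)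
  have hu (j) := existsUnique_unfold_eq hreg e (a j) (b j)
  refine ⟨fun hinj => (injective_uncurry hGu hu hinj).comp d.injective, ?_⟩
  rintro h2 v ⟨p, rfl⟩
  calc Nat.card {p' : Fin M // Φ a b (d p') = Φ a b (d p)}
      = Nat.card {q // Φ a b q = Φ a b (d p)} := Nat.card_congr (d.subtypeEquiv fun _ => Iff.rfl)
    _ = Nat.card {j // gadgetPow g (a j, b j) = gadgetPow g (Φ a b (d p))} :=
        Nat.card_congr (uncurryFiberEquiv hGu hu _)
    _ = 2 := h2 _ ⟨(d p).1, (hGu _ _).symm⟩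

/-- Rectangular reduction from `Col_N ∘ g` to `BiCol`: there are maps `A` (for Alice) and
`B` (for Bob), each depending only on that party's input, producing lists of length
`M = N·mⁿ` of inputs to `g^n`, such that the combined list `p ↦ (A a p, B b p)` is 1-to-1
whenever the encoded Collision input `j ↦ g^n(a j, b j)` is 1-to-1, and 2-to-1 whenever
it is 2-to-1. -/
theorem rectangular_reduction {α : Type*} [Fintype α]
    (g : α → α → Bool) (S : Subgroup (Equiv.Perm α × Equiv.Perm α))
    (hreg : IsRegularGadget g S) {m n N M : ℕ}
    (hm : m = Nat.card S) (hN : N = 2 ^ n) (hM : M = N * m ^ n) :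
    ∃ (A B : (Fin N → (Fin n → α)) → (Fin M → (Fin n → α))),
      ∀ a b : Fin N → (Fin n → α),
        (Function.Injective (fun j : Fin N => fun i => g (a j i) (b j i)) →
          Function.Injective (fun p : Fin M => (A a p, B b p))) ∧
        ((∀ w : Fin n → Bool, (∃ j, (fun i => g (a j i) (b j i)) = w) →
            Nat.card {j : Fin N // (fun i => g (a j i) (b j i)) = w} = 2) →
          ∀ w : (Fin n → α) × (Fin n → α), (∃ p, (A a p, B b p) = w) →
            Nat.card {p : Fin M // (A a p, B b p) = w} = 2) :=
  rectangular_reduction_general g S hreg hm hM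
end

section
/- Let N be an even natural number, let z : Fin N → Fin N be 2-to-1 (every value in the range of z has exactly two preimages), and define w : Fin N ⊕ Fin N → Fin N by w (Sum.inl i) = z i and w (Sum.inr v) = v. Let ι = Fin N ⊕ Fin N. Let F : (ι → Fin N) → ι × ι be any 'collision finder' satisfying: for every permutation π : Equiv.Perm ι, writing (p, q) = F (w ∘ π), we have p ≠ q and w (π p) = w (π q). Then, for π drawn uniformly at random from Equiv.Perm ι, the probability that both returned positions avoid the planted copy — i.e. that, with (p, q) = F (w ∘ π), both π p and π q lie in the Sum.inl copy — is at least 1/3. Equivalently, the number of permutations π of ι for which both components of F (w ∘ π) are mapped by π into the Sum.inl copy is at least (1/3) · (2N)!. -/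
section Aux

variable {ι : Type*} [DecidableEq ι]

/-- The 3-cycle `x ↦ y ↦ r ↦ x`. -/
noncomputable def cyc3 (x y r : ι) : Equiv.Perm ι := Equiv.swap x r * Equiv.swap x y

variable {x y r : ι}

lemma cyc3_x (hxy : x ≠ y) (hyr : y ≠ r) : cyc3 x y r x = y := by
  simp [cyc3, Equiv.swap_apply_of_ne_of_ne (Ne.symm hxy) hyr]

lemma cyc3_y (hxy : x ≠ y) : cyc3 x y r y = r := by
  simp [cyc3, Equiv.swap_apply_of_ne_of_ne, (Ne.symm hxy)]

lemma cyc3_r (hxr : x ≠ r) (hyr : y ≠ r) : cyc3 x y r r = x := by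
  simp [cyc3, Equiv.swap_apply_of_ne_of_ne (Ne.symm hxr) (Ne.symm hyr)]

lemma cyc3_fix {t : ι} (htx : t ≠ x) (hty : t ≠ y) (htr : t ≠ r) : cyc3 x y r t = t := by
  simp [cyc3, Equiv.swap_apply_of_ne_of_ne htx hty, Equiv.swap_apply_of_ne_of_ne htx htr]

lemma cyc3_cube (hxy : x ≠ y) (hxr : x ≠ r) (hyr : y ≠ r) (t : ι) :
    cyc3 x y r (cyc3 x y r (cyc3 x y r t)) = t := by
  by_cases htx : t = x
  · subst htx; rw [cyc3_x hxy hyr, cyc3_y hxy, cyc3_r hxr hyr]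
  by_cases hty : t = y
  · subst hty; rw [cyc3_y hxy, cyc3_r hxr hyr, cyc3_x hxy hyr]
  by_cases htr : t = r
  · subst htr; rw [cyc3_r hxr hyr, cyc3_x hxy hyr, cyc3_y hxy]
  · rw [cyc3_fix htx hty htr, cyc3_fix htx hty htr, cyc3_fix htx hty htr]

/-- Counting: if `T` has all orbits of size 3 and exactly one element of each orbit
satisfies `P`, then `P` holds on exactly a third of the elements. -/
lemma three_to_one {α : Type*} [Fintype α] (T : α → α) (P : α → Prop) [DecidablePred P]
    (hT3 : ∀ a, T (T (T a)) = a)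
    (h1 : ∀ a, T a ≠ a) (h2 : ∀ a, T (T a) ≠ a)
    (hx : ∀ a, (P a ∧ ¬P (T a) ∧ ¬P (T (T a))) ∨ (¬P a ∧ P (T a) ∧ ¬P (T (T a))) ∨
      (¬P a ∧ ¬P (T a) ∧ P (T (T a)))) :
    (Finset.univ.filter (fun a => P a)).card * 3 = Fintype.card α := by
  classical
  set f : α → α := fun a => if P a then a else if P (T a) then T a else T (T a) with hf
  have hfP : ∀ a, P (f a) := by
    intro a
    rcases hx a with ⟨h, h', h''⟩ | ⟨h, h', h''⟩ | ⟨h, h', h''⟩ <;>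
      simp only [hf, h, h', h'', if_true, if_false] <;> assumption
  have hmem : ∀ a ∈ (Finset.univ : Finset α), f a ∈ Finset.univ.filter (fun a => P a) := by
    intro a _
    simp only [Finset.mem_filter, Finset.mem_univ, true_and]
    exact hfP a
  have hsum := Finset.card_eq_sum_card_fiberwise hmem
  have hfiber : ∀ g ∈ Finset.univ.filter (fun a => P a),
      (Finset.univ.filter (fun a => f a = g)).card = 3 := by
    intro g hg
    have hPg : P g := (Finset.mem_filter.mp hg).2
    have hnPT : ¬ P (T g) ∧ ¬ P (T (T g)) := by
      rcases hx g with ⟨h, h', h''⟩ | ⟨h, h', h''⟩ | ⟨h, h', h''⟩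
      · exact ⟨h', h''⟩
      · exact absurd hPg h
      · exact absurd hPg h
    have hset : Finset.univ.filter (fun a => f a = g) = {g, T g, T (T g)} := by
      ext a
      simp only [Finset.mem_filter, Finset.mem_univ, true_and, Finset.mem_insert,
        Finset.mem_singleton]
      constructor
      · intro hfa
        have : f a = a ∨ f a = T a ∨ f a = T (T a) := by
          simp only [hf]
          by_cases h : P a
          · left; simp [h]
          · by_cases h' : P (T a)
            · right; left; simp [h, h']
            · right; right; simp [h, h']
        rcases this with h | h | h
        · left; rw [← hfa, h]
        · right; right
          rw [hfa] at h
          rw [h]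
          exact (hT3 a).symm
        · right; left
          rw [hfa] at h
          rw [h]
          exact (hT3 a).symm
      · intro ha
        rcases ha with ha | ha | ha
        · subst ha; simp [hf, hPg]
        · subst ha
          simp only [hf]
          rw [if_neg hnPT.1, if_neg hnPT.2, hT3]
        · subst ha
          simp only [hf, hT3 g]
          rw [if_neg hnPT.2, if_pos hPg]
    rw [hset]
    rw [Finset.card_insert_of_notMem, Finset.card_insert_of_notMem, Finset.card_singleton]
    · simp only [Finset.mem_singleton]
      intro h
      exact h1 (T g) h.symm
    · simp only [Finset.mem_insert, Finset.mem_singleton]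
      push_neg
      exact ⟨fun h => h1 g h.symm, fun h => h2 g h.symm⟩
  rw [Finset.sum_congr rfl hfiber, Finset.sum_const, smul_eq_mul] at hsum
  rw [← hsum, Finset.card_univ]

end Aux

/-- Key probabilistic lemma of the decision-to-search reduction: let `z` be 2-to-1, let
`w = Sum.elim z id` be the list appended with the planted copy, and let `F` be any
collision finder which, on every shuffled list `w ∘ π`, returns a pair of distinct
positions colliding in `w ∘ π`. Then for a uniformly random permutation `π` of the `2N`
positions, with probability at least `1/3` both returned positions correspond (via `π`)
to non-planted (`Sum.inl`) positions; i.e. the number of permutations `π` for which both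
components of `F (w ∘ π)` are mapped by `π` into the `Sum.inl` copy is at least
`(1/3)·(2N)!`. -/
theorem collision_finder_avoids_planted {N : ℕ} (hN : Even N)
    (z : Fin N → Fin N)
    (hz : ∀ v : Fin N, (∃ i, z i = v) → Nat.card {i : Fin N // z i = v} = 2)
    (F : ((Fin N ⊕ Fin N) → Fin N) → (Fin N ⊕ Fin N) × (Fin N ⊕ Fin N))
    (hF : ∀ π : Equiv.Perm (Fin N ⊕ Fin N),
      (F (Sum.elim z (fun v => v) ∘ π)).1 ≠ (F (Sum.elim z (fun v => v) ∘ π)).2 ∧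
      Sum.elim z (fun v => v) (π (F (Sum.elim z (fun v => v) ∘ π)).1) =
        Sum.elim z (fun v => v) (π (F (Sum.elim z (fun v => v) ∘ π)).2)) :
    ((2 * N).factorial : ℝ) / 3 ≤
      ((Finset.univ.filter (fun π : Equiv.Perm (Fin N ⊕ Fin N) =>
        (π (F (Sum.elim z (fun v => v) ∘ π)).1).isLeft = true ∧
        (π (F (Sum.elim z (fun v => v) ∘ π)).2).isLeft = true)).card : ℝ) := by
  classical
  set w : (Fin N ⊕ Fin N) → Fin N := Sum.elim z (fun v => v) with hw
  -- choose the two preimages of each value in the range of z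
  have key : ∀ v : Fin N, ∃ p : Fin N × Fin N,
      (∃ i, z i = v) → p.1 ≠ p.2 ∧ z p.1 = v ∧ z p.2 = v ∧
        ∀ j, z j = v → j = p.1 ∨ j = p.2 := by
    intro v
    by_cases hv : ∃ i, z i = v
    · have h2 := hz v hv
      rw [Nat.card_eq_two_iff] at h2
      obtain ⟨a, b, hab, hU⟩ := h2
      refine ⟨(a.1, b.1), fun _ => ⟨fun h => hab (Subtype.ext h), a.2, b.2, ?_⟩⟩
      intro j hj
      have hmem : (⟨j, hj⟩ : {i // z i = v}) ∈ ({a, b} : Set {i // z i = v}) := by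
        rw [hU]; exact Set.mem_univ _
      rcases hmem with h | h
      · left; exact congrArg Subtype.val h
      · right; exact congrArg Subtype.val h
    · exact ⟨(v, v), fun h => absurd h hv⟩
  choose pr hpr using key
  -- the 3-cycle permuting the fiber of a value u in the range of z
  set ρ : Fin N → Equiv.Perm (Fin N ⊕ Fin N) :=
    fun u => cyc3 (Sum.inl (pr u).1) (Sum.inl (pr u).2) (Sum.inr u) with hρ
  -- positions returned by F and the collision value
  set a : Equiv.Perm (Fin N ⊕ Fin N) → (Fin N ⊕ Fin N) :=
    fun π => π (F (w ∘ π)).1 with ha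
  set b : Equiv.Perm (Fin N ⊕ Fin N) → (Fin N ⊕ Fin N) :=
    fun π => π (F (w ∘ π)).2 with hb
  set vl : Equiv.Perm (Fin N ⊕ Fin N) → Fin N := fun π => w (a π) with hvl
  -- basic collision facts
  have hab : ∀ π, a π ≠ b π := by
    intro π h
    exact (hF π).1 (π.injective h)
  have hwab : ∀ π, w (a π) = w (b π) := fun π => (hF π).2
  have hrange : ∀ π, ∃ i, z i = vl π := by
    intro π
    rcases h1 : a π with i | u
    · exact ⟨i, by simp [hvl, hw, h1]⟩
    · rcases h2 : b π with j | u'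
      · refine ⟨j, ?_⟩
        have := hwab π
        rw [h1, h2] at this
        simp only [hw, Sum.elim_inl, Sum.elim_inr] at this
        simp [hvl, hw, h1, ← this]
      · exfalso
        have := hwab π
        rw [h1, h2] at this
        simp only [hw, Sum.elim_inr] at this
        exact hab π (by rw [h1, h2, this])
  -- distinctness of the three fiber elements
  have hd : ∀ π, Sum.inl (pr (vl π)).1 ≠ (Sum.inl (pr (vl π)).2 : Fin N ⊕ Fin N) := by
    intro π h
    exact (hpr (vl π) (hrange π)).1 (Sum.inl.inj h)
  -- fiber membership
  have hafib : ∀ π, a π = Sum.inl (pr (vl π)).1 ∨ a π = Sum.inl (pr (vl π)).2 ∨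
      a π = Sum.inr (vl π) := by
    intro π
    obtain ⟨-, -, -, hcomp⟩ := hpr (vl π) (hrange π)
    rcases h1 : a π with i | u
    · have hzi : z i = vl π := by simp [hvl, hw, h1]
      rcases hcomp i hzi with h | h
      · left; rw [h]
      · right; left; rw [h]
    · right; right
      have : u = vl π := by simp [hvl, hw, h1]
      rw [this]
  have hbfib : ∀ π, b π = Sum.inl (pr (vl π)).1 ∨ b π = Sum.inl (pr (vl π)).2 ∨
      b π = Sum.inr (vl π) := by
    intro π
    obtain ⟨-, -, -, hcomp⟩ := hpr (vl π) (hrange π)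
    have hwb : w (b π) = vl π := (hwab π).symm
    rcases h1 : b π with i | u
    · have hzi : z i = vl π := by rw [← hwb, h1]; simp [hw]
      rcases hcomp i hzi with h | h
      · left; rw [h]
      · right; left; rw [h]
    · right; right
      have : u = vl π := by rw [← hwb, h1]; simp [hw]
      rw [this]
  -- ρ preserves w on values in the range
  have hwρ : ∀ π, ∀ s, w (ρ (vl π) s) = w s := by
    intro π s
    obtain ⟨hne, hz1, hz2, -⟩ := hpr (vl π) (hrange π)
    have hxy : (Sum.inl (pr (vl π)).1 : Fin N ⊕ Fin N) ≠ Sum.inl (pr (vl π)).2 := hd π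
    have hxr : (Sum.inl (pr (vl π)).1 : Fin N ⊕ Fin N) ≠ Sum.inr (vl π) := Sum.inl_ne_inr
    have hyr : (Sum.inl (pr (vl π)).2 : Fin N ⊕ Fin N) ≠ Sum.inr (vl π) := Sum.inl_ne_inr
    by_cases h1 : s = Sum.inl (pr (vl π)).1
    · subst h1; rw [hρ]; rw [cyc3_x hxy hyr]; simp [hw, hz1, hz2]
    by_cases h2 : s = Sum.inl (pr (vl π)).2
    · subst h2; rw [hρ]; rw [cyc3_y hxy]; simp [hw, hz2]
    by_cases h3 : s = Sum.inr (vl π)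
    · subst h3; rw [hρ]; rw [cyc3_r hxr hyr]; simp [hw, hz1]
    · rw [hρ, cyc3_fix h1 h2 h3]
  -- the orbit map
  set T : Equiv.Perm (Fin N ⊕ Fin N) → Equiv.Perm (Fin N ⊕ Fin N) :=
    fun π => π.trans (ρ (vl π)) with hT
  have hwT : ∀ π, w ∘ (T π) = w ∘ π := by
    intro π
    funext t
    simp only [hT, Function.comp_apply, Equiv.trans_apply]
    exact hwρ π (π t)
  have haT : ∀ π, a (T π) = ρ (vl π) (a π) := by
    intro π
    simp only [ha, hwT π, hT, Equiv.trans_apply]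
    have := hwT π; simp only [hT] at this; rw [this]
  have hbT : ∀ π, b (T π) = ρ (vl π) (b π) := by
    intro π
    simp only [hb, hwT π, hT, Equiv.trans_apply]
    have := hwT π; simp only [hT] at this; rw [this]
  have hvT : ∀ π, vl (T π) = vl π := by
    intro π
    simp only [hvl, haT π]
    exact hwρ π (a π)
  have hrx : ∀ π, ρ (vl π) (Sum.inl (pr (vl π)).1) = Sum.inl (pr (vl π)).2 := by
    intro π
    simp only [hρ]
    exact cyc3_x (hd π) Sum.inl_ne_inr
  have hry : ∀ π, ρ (vl π) (Sum.inl (pr (vl π)).2) = Sum.inr (vl π) := by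
    intro π
    simp only [hρ]
    exact cyc3_y (hd π)
  have hrr : ∀ π, ρ (vl π) (Sum.inr (vl π)) = Sum.inl (pr (vl π)).1 := by
    intro π
    simp only [hρ]
    exact cyc3_r Sum.inl_ne_inr Sum.inl_ne_inr
  -- T cubes to the identity
  have hT3 : ∀ π, T (T (T π)) = π := by
    intro π
    calc T (T (T π)) = (T (T π)).trans (ρ (vl (T (T π)))) := rfl
      _ = (T (T π)).trans (ρ (vl π)) := by rw [hvT (T π), hvT π]
      _ = ((T π).trans (ρ (vl (T π)))).trans (ρ (vl π)) := rfl
      _ = ((T π).trans (ρ (vl π))).trans (ρ (vl π)) := by rw [hvT π]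
      _ = ((π.trans (ρ (vl π))).trans (ρ (vl π))).trans (ρ (vl π)) := rfl
      _ = π := by
          ext t
          simp only [Equiv.trans_apply, hρ]
          exact cyc3_cube (hd π) Sum.inl_ne_inr Sum.inl_ne_inr (π t)
  -- orbits have size exactly three
  have h1 : ∀ π, T π ≠ π := by
    intro π h
    have h0 := Equiv.ext_iff.mp h (π.symm (Sum.inl (pr (vl π)).1))
    simp only [hT, Equiv.trans_apply, Equiv.apply_symm_apply] at h0
    rw [hrx π] at h0
    exact hd π h0.symm
  have h2 : ∀ π, T (T π) ≠ π := by
    intro π h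
    have e : T (T π) = (π.trans (ρ (vl π))).trans (ρ (vl π)) := by
      calc T (T π) = (T π).trans (ρ (vl (T π))) := rfl
        _ = (T π).trans (ρ (vl π)) := by rw [hvT π]
        _ = _ := rfl
    rw [e] at h
    have h0 := Equiv.ext_iff.mp h (π.symm (Sum.inl (pr (vl π)).1))
    simp only [Equiv.trans_apply, Equiv.apply_symm_apply] at h0
    rw [hrx π, hry π] at h0
    exact Sum.inr_ne_inl h0
  -- the "good" predicate
  set P : Equiv.Perm (Fin N ⊕ Fin N) → Prop :=
    fun π => (π (F (w ∘ π)).1).isLeft = true ∧ (π (F (w ∘ π)).2).isLeft = true with hP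
  have hPiff : ∀ σ, P σ ↔ ((a σ).isLeft = true ∧ (b σ).isLeft = true) := fun σ => Iff.rfl
  -- exactly one element of each orbit is good
  have hx : ∀ π, (P π ∧ ¬P (T π) ∧ ¬P (T (T π))) ∨ (¬P π ∧ P (T π) ∧ ¬P (T (T π))) ∨
      (¬P π ∧ ¬P (T π) ∧ P (T (T π))) := by
    intro π
    rcases hafib π with hA | hA | hA <;> rcases hbfib π with hB | hB | hB
    · exact absurd (hA.trans hB.symm) (hab π)
    · left
      simp [hPiff, haT, hbT, hvT, hA, hB, hrx π, hry π, hrr π]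
    · right; left
      simp [hPiff, haT, hbT, hvT, hA, hB, hrx π, hry π, hrr π]
    · left
      simp [hPiff, haT, hbT, hvT, hA, hB, hrx π, hry π, hrr π]
    · exact absurd (hA.trans hB.symm) (hab π)
    · right; right
      simp [hPiff, haT, hbT, hvT, hA, hB, hrx π, hry π, hrr π]
    · right; left
      simp [hPiff, haT, hbT, hvT, hA, hB, hrx π, hry π, hrr π]
    · right; right
      simp [hPiff, haT, hbT, hvT, hA, hB, hrx π, hry π, hrr π]
    · exact absurd (hA.trans hB.symm) (hab π)
  -- counting
  have hcount := three_to_one T P hT3 h1 h2 hx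
  have hcard : Fintype.card (Equiv.Perm (Fin N ⊕ Fin N)) = (2 * N).factorial := by
    rw [Fintype.card_perm]
    congr 1
    simp [two_mul]
  rw [hcard] at hcount
  rw [div_le_iff₀ (by norm_num : (0:ℝ) < 3)]
  have hfc : (Finset.univ.filter (fun a => P a)) =
      (Finset.univ.filter (fun π : Equiv.Perm (Fin N ⊕ Fin N) =>
        (π (F (w ∘ π)).1).isLeft = true ∧ (π (F (w ∘ π)).2).isLeft = true)) := by
    apply Finset.filter_congr
    intro π _
    rw [hP]
  rw [hfc] at hcount
  exact_mod_cast le_of_eq hcount.symm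
end
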